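/- For continuous functions f, g on the circle, the operator T_f T_g − T_{fg} on the Hardy space is compact; consequently, if f is invertible in C(S¹), then the Toeplitz operator T_f is Fredholm. -/

import Mathlib

open MeasureTheory AddCircle

instance : Fact ((0 : ℝ) < 2 * Real.pi) := ⟨by positivity⟩

/-- The space `L²(S¹)` of square-integrable functions on the circle (of length `2π`). -/
noncomputable abbrev L2Circle : Type :=
  Lp ℂ 2 (@haarAddCircle (2 * Real.pi) _)

/-- The Hardy space `H²(S¹) ⊆ L²(S¹)`: the closed span of the Fourier monomials `zⁿ`, `n ≥ 0`. -/
noncomputable def hardySpace : Submodule ℂ L2Circle :=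
  (Submodule.span ℂ (Set.range fun n : ℕ => (fourierLp 2 (n : ℤ) : L2Circle))).topologicalClosure

instance : CompleteSpace hardySpace :=
  IsClosed.completeSpace_coe (hs := Submodule.isClosed_topologicalClosure _)

/-- The Toeplitz operator on the Hardy space associated to a multiplication operator `M` on
`L²(S¹)`: the compression `P ∘ M` of `M` to the Hardy space. -/
noncomputable def toeplitz (M : L2Circle →L[ℂ] L2Circle) : hardySpace →L[ℂ] hardySpace :=
  hardySpace.orthogonalProjectionOnto ∘L M ∘L hardySpace.subtypeL

/-- A bounded operator on a Hilbert space is *Fredholm* if its kernel is finite dimensional,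
its range is closed, and its cokernel is finite dimensional. -/
def IsFredholm {H : Type} [NormedAddCommGroup H] [InnerProductSpace ℂ H] [CompleteSpace H]
    (T : H →L[ℂ] H) : Prop :=
  FiniteDimensional ℂ (LinearMap.ker (T : H →ₗ[ℂ] H)) ∧ IsClosed (LinearMap.range (T : H →ₗ[ℂ] H) : Set H) ∧
    FiniteDimensional ℂ (H ⧸ LinearMap.range (T : H →ₗ[ℂ] H))

/-!
The Hankel operator `H_g = (1 - P) M_g|_{H²}` measures the failure of `T` to be multiplicative:
`T_f T_g - T_{fg} = -P M_f H_g`. For a monomial `g = zⁿ` the operator `H_g` has finite rank, and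
`g ↦ H_g` is a bounded linear map `C(S¹) → B(H², L²)`; since trigonometric polynomials are dense
and compact operators form a closed subspace, `H_g` is compact for every continuous `g`.

If `f` has no zeros, `T_{1/f}` is therefore an inverse of `T_f` modulo compact operators, and
`T_{1/f̄}` one of `T_f^* = T_{f̄}`. An operator `T` with `ST - 1` compact has a finite-dimensional
kernel and is bounded below off its kernel, hence has closed range;
applied to `T^*` this makes the cokernel `(ran T)ᗮ = ker T^*` finite dimensional.
-/

theorem IsCompactOperator.of_forall_mem_finiteDimensional {𝕜 E F : Type*}
    [NontriviallyNormedField 𝕜] [LocallyCompactSpace 𝕜] [NormedAddCommGroup E] [NormedSpace 𝕜 E]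
    [NormedAddCommGroup F] [NormedSpace 𝕜 F] {T : E →L[𝕜] F} (V : Submodule 𝕜 F)
    [FiniteDimensional 𝕜 V] (hV : ∀ x, T x ∈ V) : IsCompactOperator T := by
  have : ProperSpace V := FiniteDimensional.proper 𝕜 V
  exact (isCompactOperator_id.comp_clm (T.codRestrict V hV)).clm_comp V.subtypeL

theorem IsCompactOperator.of_dense_span {𝕜 X E F : Type*} [NontriviallyNormedField 𝕜]
    [NormedAddCommGroup X] [NormedSpace 𝕜 X] [NormedAddCommGroup E] [NormedSpace 𝕜 E]
    [NormedAddCommGroup F] [NormedSpace 𝕜 F] [CompleteSpace F]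
    (Φ : X →L[𝕜] E →L[𝕜] F) {s : Set X} (hs : (Submodule.span 𝕜 s).topologicalClosure = ⊤)
    (h : ∀ x ∈ s, IsCompactOperator (Φ x)) (x : X) : IsCompactOperator (Φ x) := by
  let C := (compactOperator (RingHom.id 𝕜) E F).comap (Φ : X →ₗ[𝕜] E →L[𝕜] F)
  have hC : IsClosed (C : Set X) := isClosed_setOfPred_isCompactOperator.preimage Φ.continuous
  have hsC : Submodule.span 𝕜 s ≤ C := Submodule.span_le.2 h
  exact Submodule.topologicalClosure_minimal _ hsC hC (hs ▸ Submodule.mem_top : x ∈ _)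

namespace ContinuousLinearMap

section NormedSpace

variable {𝕜 E F : Type*} [NontriviallyNormedField 𝕜] [NormedAddCommGroup E] [NormedSpace 𝕜 E]
  [NormedAddCommGroup F] [NormedSpace 𝕜 F] {T : E →L[𝕜] F} {S : F →L[𝕜] E}

theorem finiteDimensional_ker_of_isCompactOperator_comp_sub_one [CompleteSpace 𝕜]
    (hK : IsCompactOperator ⇑(S ∘L T - 1)) :
    FiniteDimensional 𝕜 (LinearMap.ker (T : E →ₗ[𝕜] F)) := by
  set N := LinearMap.ker (T : E →ₗ[𝕜] F)
  have hKN : ∀ x ∈ N, (S ∘L T - 1) x = -x := fun x (hx : T x = 0) => by simp [hx]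
  have hmaps : ∀ x ∈ N, ((S ∘L T - 1 : E →L[𝕜] E) : E →ₗ[𝕜] E) x ∈ N := fun x hx => by
    rw [coe_coe, hKN x hx]
    exact N.neg_mem hx
  have hid : (id : N → N) = -⇑(LinearMap.restrict _ hmaps) := by
    funext x
    ext
    simp [LinearMap.restrict_apply]
  exact FiniteDimensional.of_isCompactOperator_id (𝕜 := 𝕜)
    (hid ▸ (hK.restrict hmaps T.isClosed_ker).neg)

end NormedSpace

section RCLike

variable {𝕜 E F : Type*} [RCLike 𝕜] [NormedAddCommGroup E] [NormedSpace 𝕜 E]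
  [NormedAddCommGroup F] [NormedSpace 𝕜 F] {T : E →L[𝕜] F} {S : F →L[𝕜] E}

theorem exists_antilipschitzWith_of_isCompactOperator_comp_sub_one (hT : Function.Injective T)
    (hK : IsCompactOperator ⇑(S ∘L T - 1)) : ∃ C, AntilipschitzWith C T := by
  rw [antilipschitzWith_iff_exists_mul_le_norm]
  by_contra! hsmall
  have hunit : ∀ n : ℕ, ∃ x : E, ‖x‖ = 1 ∧ ‖T x‖ < 1 / (n + 1) := fun n => by
    obtain ⟨x, hx⟩ := hsmall (1 / (n + 1)) (by positivity)
    have hx0 : x ≠ 0 := by rintro rfl; simp at hx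
    refine ⟨(‖x‖⁻¹ : 𝕜) • x, norm_smul_inv_norm hx0, ?_⟩
    rw [map_smul, norm_smul, norm_inv, RCLike.norm_ofReal, abs_norm,
      inv_mul_lt_iff₀ (norm_pos_iff.2 hx0)]
    linarith
  choose x hx1 hxT using hunit
  have hTx : Filter.Tendsto (fun n => T (x n)) Filter.atTop (nhds 0) :=
    squeeze_zero_norm (fun n => (hxT n).le) tendsto_one_div_add_atTop_nhds_zero_nat
  obtain ⟨C, hC, hKC⟩ := hK.image_closedBall_subset_compact 1
  obtain ⟨y, -, φ, hφ, hKy⟩ := hC.tendsto_subseq (x := fun n => (S ∘L T - 1) (x n))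
    fun n => hKC ⟨x n, by simp [hx1], rfl⟩
  -- `x = S (T x) - (S T - 1) x`, and the first term tends to `0`
  have hxy : Filter.Tendsto (x ∘ φ) Filter.atTop (nhds (-y)) := by
    have := ((S.continuous.tendsto 0).comp (hTx.comp hφ.tendsto_atTop)).sub hKy
    simpa [Function.comp_def] using this
  have hTy : T (-y) = 0 :=
    tendsto_nhds_unique ((T.continuous.tendsto _).comp hxy) (hTx.comp hφ.tendsto_atTop)
  have hy1 : ‖-y‖ = 1 :=
    tendsto_nhds_unique ((continuous_norm.tendsto _).comp hxy) (by simp [Function.comp_def, hx1])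
  simp [hT (hTy.trans T.map_zero.symm)] at hy1

end RCLike

section InnerProductSpace

variable {𝕜 E F : Type*} [RCLike 𝕜]
  [NormedAddCommGroup E] [InnerProductSpace 𝕜 E] [CompleteSpace E]
  [NormedAddCommGroup F] [InnerProductSpace 𝕜 F] {T : E →L[𝕜] F}

theorem isClosed_range_of_isCompactOperator_comp_sub_one {S : F →L[𝕜] E}
    (hK : IsCompactOperator ⇑(S ∘L T - 1)) :
    IsClosed (LinearMap.range (T : E →ₗ[𝕜] F) : Set F) := by
  set N := LinearMap.ker (T : E →ₗ[𝕜] F)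
  have : CompleteSpace N := T.isClosed_ker.completeSpace_coe
  have : CompleteSpace Nᗮ := N.isClosed_orthogonal.completeSpace_coe
  set T' := T ∘L Nᗮ.subtypeL
  have hinj : Function.Injective T' := fun x y hxy => by
    have hN : (x - y : E) ∈ N := by
      rw [LinearMap.mem_ker, coe_coe, map_sub, sub_eq_zero]
      exact hxy
    exact Subtype.ext <| sub_eq_zero.1 <|
      Submodule.disjoint_def.1 N.orthogonal_disjoint _ hN (Nᗮ.sub_mem x.2 y.2)
  have hK' : IsCompactOperator ⇑((Nᗮ.orthogonalProjectionOnto ∘L S) ∘L T' - 1) := by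
    have : (Nᗮ.orthogonalProjectionOnto ∘L S) ∘L T' - 1 =
        Nᗮ.orthogonalProjectionOnto ∘L (S ∘L T - 1) ∘L Nᗮ.subtypeL := by
      ext x
      simp [T']
    rw [this, coe_comp, coe_comp]
    exact (hK.comp_clm _).clm_comp _
  obtain ⟨C, hC⟩ := exists_antilipschitzWith_of_isCompactOperator_comp_sub_one hinj hK'
  have hrange : Set.range T' = LinearMap.range (T : E →ₗ[𝕜] F) := by
    refine subset_antisymm (fun _ ⟨x, hx⟩ => ⟨x, hx⟩) ?_
    rintro _ ⟨v, rfl⟩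
    refine ⟨Nᗮ.orthogonalProjectionOnto v, ?_⟩
    have hNv : T (N.starProjection v) = 0 := N.starProjection_apply_mem v
    simp [T', hNv]
  exact hrange ▸ hC.isClosed_range T'.uniformContinuous

theorem finiteDimensional_quotient_range_of_isClosed_range [CompleteSpace F]
    (hT : IsClosed (LinearMap.range (T : E →ₗ[𝕜] F) : Set F))
    [FiniteDimensional 𝕜 (LinearMap.ker (adjoint T : F →ₗ[𝕜] E))] :
    FiniteDimensional 𝕜 (F ⧸ LinearMap.range (T : E →ₗ[𝕜] F)) := by
  have : CompleteSpace (LinearMap.range (T : E →ₗ[𝕜] F)) := hT.completeSpace_coe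
  have : FiniteDimensional 𝕜 (LinearMap.range (T : E →ₗ[𝕜] F))ᗮ := T.orthogonal_range ▸ ‹_›
  exact (Submodule.quotientEquivOfIsCompl _ _ (Submodule.isCompl_orthogonal _)).symm.finiteDimensional

end InnerProductSpace

end ContinuousLinearMap

theorem isFredholm_of_isCompactOperator_comp_sub_one {H : Type} [NormedAddCommGroup H]
    [InnerProductSpace ℂ H] [CompleteSpace H] {T S S' : H →L[ℂ] H}
    (hS : IsCompactOperator ⇑(S ∘L T - 1)) (hS' : IsCompactOperator ⇑(S' ∘L T.adjoint - 1)) :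
    IsFredholm T := by
  have hclosed := ContinuousLinearMap.isClosed_range_of_isCompactOperator_comp_sub_one hS
  have := ContinuousLinearMap.finiteDimensional_ker_of_isCompactOperator_comp_sub_one hS'
  exact ⟨ContinuousLinearMap.finiteDimensional_ker_of_isCompactOperator_comp_sub_one hS, hclosed,
    ContinuousLinearMap.finiteDimensional_quotient_range_of_isClosed_range hclosed⟩

namespace MeasureTheory.L2

variable {α 𝕜 : Type*} [RCLike 𝕜] [TopologicalSpace α] [CompactSpace α] [MeasurableSpace α]
  [BorelSpace α] (μ : Measure α) [IsFiniteMeasure μ]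

noncomputable def multiplicationOp : C(α, 𝕜) →L[𝕜] Lp 𝕜 2 μ →L[𝕜] Lp 𝕜 2 μ :=
  (ContinuousLinearMap.mul 𝕜 𝕜).holderL μ ⊤ 2 2 ∘L ContinuousMap.toLp ⊤ μ 𝕜

variable {μ}

theorem coeFn_multiplicationOp (h : C(α, 𝕜)) (u : Lp 𝕜 2 μ) :
    multiplicationOp μ h u =ᵐ[μ] fun x => h x * u x := by
  filter_upwards [(ContinuousLinearMap.mul 𝕜 𝕜).coeFn_holder (r := 2)
      (ContinuousMap.toLp ⊤ μ 𝕜 h) u,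
    ContinuousMap.coeFn_toLp (E := 𝕜) (p := ⊤) (𝕜 := 𝕜) μ h] with x h1 h2
  rw [multiplicationOp, ContinuousLinearMap.comp_apply, ContinuousLinearMap.holderL_apply_apply,
    h1, h2]
  rfl

theorem multiplicationOp_eq_of_ae_eq {h : C(α, 𝕜)} {M : Lp 𝕜 2 μ →L[𝕜] Lp 𝕜 2 μ}
    (hM : ∀ u : Lp 𝕜 2 μ, M u =ᵐ[μ] fun x => h x * u x) : multiplicationOp μ h = M :=
  ContinuousLinearMap.ext fun u => Lp.ext ((coeFn_multiplicationOp h u).trans (hM u).symm)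

theorem multiplicationOp_one : multiplicationOp μ (1 : C(α, 𝕜)) = 1 :=
  multiplicationOp_eq_of_ae_eq fun u => by simp

theorem multiplicationOp_mul (a b : C(α, 𝕜)) :
    multiplicationOp μ (a * b) = multiplicationOp μ a ∘L multiplicationOp μ b :=
  multiplicationOp_eq_of_ae_eq fun u => by
    filter_upwards [coeFn_multiplicationOp a (multiplicationOp μ b u),
      coeFn_multiplicationOp b u] with x h1 h2
    simp [h1, h2, mul_assoc]

theorem adjoint_multiplicationOp (h : C(α, 𝕜)) :
    (multiplicationOp μ h).adjoint = multiplicationOp μ (star h) := by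
  refine ((ContinuousLinearMap.eq_adjoint_iff _ _).2 fun u v => ?_).symm
  rw [L2.inner_def, L2.inner_def]
  refine integral_congr_ae ?_
  filter_upwards [coeFn_multiplicationOp (star h) u, coeFn_multiplicationOp h v] with x h1 h2
  simp only [h1, h2, RCLike.inner_apply, ContinuousMap.star_apply, map_mul, RCLike.star_def,
    RCLike.conj_conj]
  ring

end MeasureTheory.L2

open MeasureTheory.L2

local notation "M[" h "]" => multiplicationOp haarAddCircle h

theorem multiplicationOp_fourier_fourierLp (n m : ℤ) :
    M[fourier n] (fourierLp 2 m) = (fourierLp 2 (n + m) : L2Circle) := by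
  refine Lp.ext ?_
  filter_upwards [coeFn_multiplicationOp (fourier n) (fourierLp 2 m),
    coeFn_fourierLp (T := 2 * Real.pi) 2 m, coeFn_fourierLp (T := 2 * Real.pi) 2 (n + m)]
    with x h1 h2 h3
  rw [h1, h2, h3, fourier_add]

theorem fourierLp_mem_hardySpace {n : ℤ} (hn : 0 ≤ n) :
    (fourierLp 2 n : L2Circle) ∈ hardySpace :=
  Submodule.le_topologicalClosure _ (Submodule.subset_span ⟨n.toNat, by simp [hn]⟩)

theorem fourierLp_mem_orthogonal_hardySpace {n : ℤ} (hn : n < 0) :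
    (fourierLp 2 n : L2Circle) ∈ hardySpaceᗮ := by
  have hortho : ℂ ∙ (fourierLp 2 n : L2Circle) ⟂
      Submodule.span ℂ (Set.range fun k : ℕ => (fourierLp 2 (k : ℤ) : L2Circle)) := by
    refine Submodule.isOrtho_span.2 ?_
    rintro _ rfl _ ⟨k, rfl⟩
    rw [orthonormal_iff_ite.1 orthonormal_fourier, if_neg (by omega)]
  rw [hardySpace, Submodule.orthogonal_closure]
  exact hortho.le (Submodule.mem_span_singleton_self _)

noncomputable def hankel : C(AddCircle (2 * Real.pi), ℂ) →L[ℂ] hardySpace →L[ℂ] L2Circle :=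
  .postcomp hardySpace hardySpaceᗮ.starProjection ∘L .precomp L2Circle hardySpace.subtypeL ∘L
    multiplicationOp haarAddCircle

theorem isCompactOperator_hankel_fourier (n : ℤ) : IsCompactOperator (hankel (fourier n)) := by
  let V := Submodule.span ℂ ((fun m : ℤ => (fourierLp 2 m : L2Circle)) '' Set.Ico n 0)
  have : FiniteDimensional ℂ V :=
    FiniteDimensional.span_of_finite ℂ ((Set.finite_Ico n 0).image _)
  have hV : hardySpace ≤
      V.comap (hardySpaceᗮ.starProjection ∘L M[fourier n] : L2Circle →ₗ[ℂ] L2Circle) := by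
    refine Submodule.topologicalClosure_minimal _ (Submodule.span_le.2 ?_)
      (V.closed_of_finiteDimensional.preimage (ContinuousLinearMap.continuous _))
    rintro _ ⟨k, rfl⟩
    simp only [SetLike.mem_coe, Submodule.mem_comap, ContinuousLinearMap.coe_coe,
      ContinuousLinearMap.comp_apply, multiplicationOp_fourier_fourierLp]
    rcases lt_or_ge (n + k) 0 with hnk | hnk
    · rw [Submodule.starProjection_eq_self_iff.2 (fourierLp_mem_orthogonal_hardySpace hnk)]
      exact Submodule.subset_span ⟨n + k, ⟨by omega, hnk⟩, rfl⟩
    · rw [(Submodule.starProjection_apply_eq_zero_iff _).2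
        (Submodule.le_orthogonal_orthogonal _ (fourierLp_mem_hardySpace hnk))]
      exact V.zero_mem
  exact IsCompactOperator.of_forall_mem_finiteDimensional V fun u => hV u.2

theorem isCompactOperator_hankel (h : C(AddCircle (2 * Real.pi), ℂ)) :
    IsCompactOperator (hankel h) :=
  IsCompactOperator.of_dense_span hankel span_fourier_closure_eq_top
    (by rintro _ ⟨n, rfl⟩; exact isCompactOperator_hankel_fourier n) h

theorem toeplitz_comp_toeplitz_sub_toeplitz_comp (A B : L2Circle →L[ℂ] L2Circle) :
    toeplitz A ∘L toeplitz B - toeplitz (A ∘L B) =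
      -(hardySpace.orthogonalProjectionOnto ∘L A ∘L hardySpaceᗮ.starProjection ∘L B ∘L
        hardySpace.subtypeL) := by
  ext u : 1
  simp [toeplitz, Submodule.starProjection_orthogonal']

theorem adjoint_toeplitz (A : L2Circle →L[ℂ] L2Circle) :
    (toeplitz A).adjoint = toeplitz A.adjoint := by
  simp only [toeplitz, ContinuousLinearMap.adjoint_comp, Submodule.adjoint_subtypeL,
    Submodule.adjoint_orthogonalProjectionOnto, ContinuousLinearMap.comp_assoc]

theorem toeplitz_one : toeplitz 1 = 1 := by
  ext u
  simp [toeplitz]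

theorem isCompactOperator_toeplitz_comp_toeplitz_sub_toeplitz_mul
    (a b : C(AddCircle (2 * Real.pi), ℂ)) :
    IsCompactOperator ⇑(toeplitz M[a] ∘L toeplitz M[b] - toeplitz M[a * b]) := by
  rw [multiplicationOp_mul, toeplitz_comp_toeplitz_sub_toeplitz_comp]
  exact ((isCompactOperator_hankel b).clm_comp (hardySpace.orthogonalProjectionOnto ∘L M[a])).neg

theorem isCompactOperator_toeplitz_comp_toeplitz_sub_one {a b : C(AddCircle (2 * Real.pi), ℂ)}
    (hab : a * b = 1) : IsCompactOperator ⇑(toeplitz M[a] ∘L toeplitz M[b] - 1) := by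
  simpa [hab, multiplicationOp_one, toeplitz_one] using
    isCompactOperator_toeplitz_comp_toeplitz_sub_toeplitz_mul a b

/-- For continuous functions `f, g` on the circle, `T_f T_g − T_{fg}` is a compact operator
on the Hardy space; consequently if `f` is invertible in `C(S¹)` then the Toeplitz operator
`T_f` is Fredholm. -/
theorem toeplitz_comp_sub_toeplitz_mul_isCompact
    (f g : C(AddCircle (2 * Real.pi), ℂ))
    (Mf Mg Mfg : L2Circle →L[ℂ] L2Circle)
    (hMf : ∀ u : L2Circle,
      (Mf u : AddCircle (2 * Real.pi) → ℂ) =ᵐ[haarAddCircle] fun x => f x * u x)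
    (hMg : ∀ u : L2Circle,
      (Mg u : AddCircle (2 * Real.pi) → ℂ) =ᵐ[haarAddCircle] fun x => g x * u x)
    (hMfg : ∀ u : L2Circle,
      (Mfg u : AddCircle (2 * Real.pi) → ℂ) =ᵐ[haarAddCircle] fun x => f x * g x * u x) :
    IsCompactOperator ⇑(toeplitz Mf ∘L toeplitz Mg - toeplitz Mfg) ∧
      ((∀ x, f x ≠ 0) → IsFredholm (toeplitz Mf)) := by
  obtain rfl := multiplicationOp_eq_of_ae_eq hMf
  obtain rfl := multiplicationOp_eq_of_ae_eq hMg
  obtain rfl := multiplicationOp_eq_of_ae_eq (h := f * g) hMfg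
  refine ⟨isCompactOperator_toeplitz_comp_toeplitz_sub_toeplitz_mul f g, fun hf => ?_⟩
  obtain ⟨u, rfl⟩ := (ContinuousMap.isUnit_iff_forall_ne_zero f).2 hf
  have hstar : star (↑u⁻¹ : C(AddCircle (2 * Real.pi), ℂ)) * star ↑u = 1 := by
    rw [← star_mul, u.mul_inv, star_one]
  have hadj : IsCompactOperator ⇑(toeplitz M[star ↑u⁻¹] ∘L (toeplitz M[↑u]).adjoint - 1) := by
    rw [adjoint_toeplitz, adjoint_multiplicationOp]
    exact isCompactOperator_toeplitz_comp_toeplitz_sub_one hstar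
  exact isFredholm_of_isCompactOperator_comp_sub_one
    (isCompactOperator_toeplitz_comp_toeplitz_sub_one u.inv_mul) hadj
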